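/- Let f : X → Y be a continuous map between locally compact Hausdorff spaces and let G₁, G₂, H₁, H₂ ∈ CR(Y) with G_i ⊆ int(H_i) for i = 1,2. If F ∈ CR(X) and F ⊆ f⁻¹(int(G₁ ∪ G₂)), then there exist F₁, F₂ ∈ CR(X) with F_i ⊆ f⁻¹(int(H_i)) for i = 1,2 and F ⊆ F₁ ∪ F₂. -/

import Mathlib

open Set

section RegularClosed

variable {X : Type*} [TopologicalSpace X] [LocallyCompactSpace X]

theorem exists_compact_regularClosed_between [RegularSpace X] {K U : Set X} (hK : IsCompact K)
    (hU : IsOpen U) (hKU : K ⊆ U) :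
    ∃ L : Set X, closure (interior L) = L ∧ IsCompact L ∧ K ⊆ L ∧ L ⊆ U := by
  obtain ⟨L, hLc, hLcl, hKL, hLU⟩ := exists_compact_closed_between hK hU hKU
  have hsub : closure (interior L) ⊆ L := hLcl.closure_interior_subset
  exact ⟨closure (interior L), closure_interior_idem, hLc.of_isClosed_subset isClosed_closure hsub,
    hKL.trans subset_closure, hsub.trans hLU⟩

theorem IsCompact.exists_compact_regularClosed_cover [R1Space X] {K U V : Set X}
    (hK : IsCompact K) (hU : IsOpen U) (hV : IsOpen V) (hKUV : K ⊆ U ∪ V) :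
    ∃ L₁ L₂ : Set X,
      (closure (interior L₁) = L₁ ∧ IsCompact L₁ ∧ L₁ ⊆ U) ∧
      (closure (interior L₂) = L₂ ∧ IsCompact L₂ ∧ L₂ ⊆ V) ∧
      K ⊆ L₁ ∪ L₂ := by
  obtain ⟨K₁, K₂, hK₁c, hK₂c, hK₁U, hK₂V, rfl⟩ := hK.binary_compact_cover hU hV hKUV
  obtain ⟨L₁, hL₁r, hL₁c, hKL₁, hL₁U⟩ := exists_compact_regularClosed_between hK₁c hU hK₁U
  obtain ⟨L₂, hL₂r, hL₂c, hKL₂, hL₂V⟩ := exists_compact_regularClosed_between hK₂c hV hK₂V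
  exact ⟨L₁, L₂, ⟨hL₁r, hL₁c, hL₁U⟩, ⟨hL₂r, hL₂c, hL₂V⟩, union_subset_union hKL₁ hKL₂⟩

end RegularClosed

theorem stmt_17_general {X Y : Type*} [TopologicalSpace X] [LocallyCompactSpace X] [T2Space X]
    [TopologicalSpace Y]
    (f : X → Y) (hf : Continuous f)
    (G₁ G₂ H₁ H₂ : Set Y)
    (h₁ : G₁ ⊆ interior H₁) (h₂ : G₂ ⊆ interior H₂)
    (F : Set X) (hFc : IsCompact F)
    (hFG : F ⊆ f ⁻¹' (interior (G₁ ∪ G₂))) :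
    ∃ F₁ F₂ : Set X,
      (closure (interior F₁) = F₁ ∧ IsCompact F₁ ∧ F₁ ⊆ f ⁻¹' (interior H₁)) ∧
      (closure (interior F₂) = F₂ ∧ IsCompact F₂ ∧ F₂ ⊆ f ⁻¹' (interior H₂)) ∧
      F ⊆ F₁ ∪ F₂ := by
  have hcov : F ⊆ f ⁻¹' interior H₁ ∪ f ⁻¹' interior H₂ :=
    hFG.trans <| preimage_mono <| interior_subset.trans (union_subset_union h₁ h₂)
  exact hFc.exists_compact_regularClosed_cover (isOpen_interior.preimage hf)
    (isOpen_interior.preimage hf) hcov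

/-- If G_i ⊆ int(H_i) (i=1,2) in CR(Y) and F ∈ CR(X) with
F ⊆ f⁻¹(int(G₁ ∪ G₂)), then F ⊆ F₁ ∪ F₂ for some F_i ∈ CR(X) with
F_i ⊆ f⁻¹(int H_i). -/
theorem stmt_17 {X Y : Type*} [TopologicalSpace X] [LocallyCompactSpace X] [T2Space X]
    [TopologicalSpace Y] [LocallyCompactSpace Y] [T2Space Y]
    (f : X → Y) (hf : Continuous f)
    (G₁ G₂ H₁ H₂ : Set Y)
    (hG₁ : closure (interior G₁) = G₁) (hG₁c : IsCompact G₁)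
    (hG₂ : closure (interior G₂) = G₂) (hG₂c : IsCompact G₂)
    (hH₁ : closure (interior H₁) = H₁) (hH₁c : IsCompact H₁)
    (hH₂ : closure (interior H₂) = H₂) (hH₂c : IsCompact H₂)
    (h₁ : G₁ ⊆ interior H₁) (h₂ : G₂ ⊆ interior H₂)
    (F : Set X) (hF : closure (interior F) = F) (hFc : IsCompact F)
    (hFG : F ⊆ f ⁻¹' (interior (G₁ ∪ G₂))) :
    ∃ F₁ F₂ : Set X,
      (closure (interior F₁) = F₁ ∧ IsCompact F₁ ∧ F₁ ⊆ f ⁻¹' (interior H₁)) ∧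
      (closure (interior F₂) = F₂ ∧ IsCompact F₂ ∧ F₂ ⊆ f ⁻¹' (interior H₂)) ∧
      F ⊆ F₁ ∪ F₂ :=
  stmt_17_general f hf G₁ G₂ H₁ H₂ h₁ h₂ F hFc hFG
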